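/- arXiv:2112.06767 — 3 statements merged into one kernel-verified Lean document; each statement's English description precedes it below -/
import Mathlib

section
/- Let {F_m}_{m∈M} be a finite family of maps on ℝⁿ and suppose for each m there is a 'canonical trajectory' x^(m) : ℕ → ℝⁿ and a common constant λ < 1 with ‖F_m(x) - x^(m)(k+1)‖ ≤ λ‖x - x^(m)(k)‖ for all x ∈ ℝⁿ and all k. Suppose sup_k max_{m₁,m₂} ‖x^(m₁)(k) - x^(m₂)(k)‖ ≤ R < ∞. Then every trajectory x(k+1) = F_{σ(k)}(x(k)), for any selection sequence σ : ℕ → M, satisfies dist(x(k), X̄(k)) ≤ λR/(1-λ) + (dist(x(0), X̄(0)) - λR/(1-λ))λᵏ for all k ≥ 1, where X̄(k) is the convex hull of {x^(m)(k) : m ∈ M} and dist is Euclidean distance to a set. -/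
/-!
If `x` is within distance `d` of the hull of the canonical points at time `k`, it is within
`d + R` of each canonical point, since the hull has diameter at most `R`. Applying the map chosen
at time `k` contracts the distance to that map's next canonical point, which lies in the next hull,
so `d (k + 1) ≤ λ d k + λ R`. Unrolling this affine recurrence, whose fixed point is
`λ R / (1 - λ)`, gives the bound.
-/

open Metric Set

theorem le_add_mul_pow_of_succ_le_mul_add {a b : ℝ} {d : ℕ → ℝ} (ha0 : 0 ≤ a) (ha1 : a ≠ 1)
    (hd : ∀ k, d (k + 1) ≤ a * d k + b) (k : ℕ) :
    d k ≤ b / (1 - a) + (d 0 - b / (1 - a)) * a ^ k := by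
  have hfix : a * (b / (1 - a)) + b = b / (1 - a) := by
    field_simp [sub_ne_zero.mpr ha1.symm]
    ring
  induction k with
  | zero => simp
  | succ k ih =>
    calc d (k + 1) ≤ a * d k + b := hd k
      _ ≤ a * (b / (1 - a) + (d 0 - b / (1 - a)) * a ^ k) + b := by gcongr
      _ = b / (1 - a) + (d 0 - b / (1 - a)) * a ^ (k + 1) := by
          linear_combination hfix

section ConvexHull

variable {E ι : Type*} [SeminormedAddCommGroup E] [NormedSpace ℝ E]

theorem dist_le_infDist_convexHull_add {v : ι → E} {R : ℝ}
    (hv : ∀ i j, dist (v i) (v j) ≤ R) (x : E) (i : ι) :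
    dist x (v i) ≤ infDist x (convexHull ℝ (range v)) + R := by
  have hbdd : Bornology.IsBounded (convexHull ℝ (range v)) :=
    isBounded_convexHull.mpr <| isBounded_iff.mpr
      ⟨R, by rintro _ ⟨j, rfl⟩ _ ⟨l, rfl⟩; exact hv j l⟩
  have hdiam : diam (convexHull ℝ (range v)) ≤ R := by
    rw [convexHull_diam]
    exact diam_le_of_forall_dist_le ((dist_self _).symm.trans_le (hv i i))
      (by rintro _ ⟨j, rfl⟩ _ ⟨l, rfl⟩; exact hv j l)
  calc dist x (v i)
      ≤ infDist x (convexHull ℝ (range v)) + diam (convexHull ℝ (range v)) :=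
        dist_le_infDist_add_diam hbdd (subset_convexHull ℝ _ (mem_range_self i))
    _ ≤ infDist x (convexHull ℝ (range v)) + R := by gcongr

theorem infDist_convexHull_le_of_dist_le_mul {v w : ι → E} {R lam : ℝ}
    (hv : ∀ i j, dist (v i) (v j) ≤ R) (hlam : 0 ≤ lam) {x y : E} (i : ι)
    (hy : dist y (w i) ≤ lam * dist x (v i)) :
    infDist y (convexHull ℝ (range w)) ≤ lam * infDist x (convexHull ℝ (range v)) + lam * R :=
  calc infDist y (convexHull ℝ (range w))
      ≤ dist y (w i) := infDist_le_dist_of_mem (subset_convexHull ℝ _ (mem_range_self i))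
    _ ≤ lam * dist x (v i) := hy
    _ ≤ lam * (infDist x (convexHull ℝ (range v)) + R) := by
        gcongr; exact dist_le_infDist_convexHull_add hv x i
    _ = lam * infDist x (convexHull ℝ (range v)) + lam * R := mul_add _ _ _

end ConvexHull

theorem irf_trajectory_dist_to_hull_bound_general {n : ℕ} {M : Type*}
    (F : M → EuclideanSpace ℝ (Fin n) → EuclideanSpace ℝ (Fin n))
    (traj : M → ℕ → EuclideanSpace ℝ (Fin n))
    (lam : ℝ) (hlam0 : 0 ≤ lam) (hlam1 : lam < 1)
    (hcontr : ∀ m (x : EuclideanSpace ℝ (Fin n)) k,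
      ‖F m x - traj m (k + 1)‖ ≤ lam * ‖x - traj m k‖)
    (R : ℝ) (hR : ∀ k, ∀ m₁ m₂ : M, ‖traj m₁ k - traj m₂ k‖ ≤ R)
    (σ : ℕ → M) (x : ℕ → EuclideanSpace ℝ (Fin n))
    (hx : ∀ k, x (k + 1) = F (σ k) (x k)) :
    ∀ k, 1 ≤ k →
      infDist (x k) (convexHull ℝ (Set.range fun m => traj m k)) ≤
        lam * R / (1 - lam) +
          (infDist (x 0) (convexHull ℝ (Set.range fun m => traj m 0)) -
            lam * R / (1 - lam)) * lam ^ k := by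
  have hstep : ∀ k, infDist (x (k + 1)) (convexHull ℝ (range fun m => traj m (k + 1))) ≤
      lam * infDist (x k) (convexHull ℝ (range fun m => traj m k)) + lam * R := fun k => by
    rw [hx k]
    exact infDist_convexHull_le_of_dist_le_mul (by simpa only [dist_eq_norm] using hR k) hlam0
      (σ k) (by simpa only [dist_eq_norm] using hcontr (σ k) (x k) k)
  exact fun k _ => le_add_mul_pow_of_succ_le_mul_add
    (d := fun k => infDist (x k) (convexHull ℝ (range fun m => traj m k))) hlam0 hlam1.ne hstep k

/-- Deterministic core of Theorem 2: any trajectory of the iterated function system stays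
within a geometrically-decaying distance of the convex hull of the canonical trajectories. -/
theorem irf_trajectory_dist_to_hull_bound {n : ℕ} {M : Type*} [Fintype M] [Nonempty M]
    (F : M → EuclideanSpace ℝ (Fin n) → EuclideanSpace ℝ (Fin n))
    (traj : M → ℕ → EuclideanSpace ℝ (Fin n))
    (lam : ℝ) (hlam0 : 0 ≤ lam) (hlam1 : lam < 1)
    (hcontr : ∀ m (x : EuclideanSpace ℝ (Fin n)) k,
      ‖F m x - traj m (k + 1)‖ ≤ lam * ‖x - traj m k‖)
    (R : ℝ) (hR : ∀ k, ∀ m₁ m₂ : M, ‖traj m₁ k - traj m₂ k‖ ≤ R)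
    (σ : ℕ → M) (x : ℕ → EuclideanSpace ℝ (Fin n))
    (hx : ∀ k, x (k + 1) = F (σ k) (x k)) :
    ∀ k, 1 ≤ k →
      infDist (x k) (convexHull ℝ (Set.range fun m => traj m k)) ≤
        lam * R / (1 - lam) +
          (infDist (x 0) (convexHull ℝ (Set.range fun m => traj m 0)) -
            lam * R / (1 - lam)) * lam ^ k :=
  irf_trajectory_dist_to_hull_bound_general F traj lam hlam0 hlam1 hcontr R hR σ x hx
end

section
/- Under the hypotheses of the previous statement (each F_m contracts toward its canonical trajectory x^(m) with common rate λ < 1, and the canonical trajectories stay within mutual distance R), for any ε > 0 and any initial point x(0), there exists K such that for all k ≥ K and all selection sequences σ, dist(x(k), X̄(k)) ≤ λR/(1-λ) + ε. In particular, the probability that dist(x(k), X̄(k)) ≤ D + ε tends to 1 as k → ∞ for any random selection process, where D = λR/(1-λ). -/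
open Metric

/-- Theorem 2 (Lohmiller–Slotine type): uniformly over all selection sequences, trajectories
of the iterated random function eventually stay within `λR/(1-λ) + ε` of the convex hull of
the canonical trajectories. -/
theorem irf_trajectory_eventually_near_hull {n : ℕ} {M : Type*} [Fintype M] [Nonempty M]
    (F : M → EuclideanSpace ℝ (Fin n) → EuclideanSpace ℝ (Fin n))
    (traj : M → ℕ → EuclideanSpace ℝ (Fin n))
    (lam : ℝ) (hlam0 : 0 ≤ lam) (hlam1 : lam < 1)
    (hcontr : ∀ m (x : EuclideanSpace ℝ (Fin n)) k,
      ‖F m x - traj m (k + 1)‖ ≤ lam * ‖x - traj m k‖)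
    (R : ℝ) (hR : ∀ k, ∀ m₁ m₂ : M, ‖traj m₁ k - traj m₂ k‖ ≤ R)
    (x0 : EuclideanSpace ℝ (Fin n)) (ε : ℝ) (hε : 0 < ε) :
    ∃ K : ℕ, ∀ (σ : ℕ → M) (x : ℕ → EuclideanSpace ℝ (Fin n)),
      x 0 = x0 → (∀ k, x (k + 1) = F (σ k) (x k)) →
      ∀ k, K ≤ k →
        infDist (x k) (convexHull ℝ (Set.range fun m => traj m k)) ≤
          lam * R / (1 - lam) + ε := by
  have m0 : M := Classical.arbitrary M
  have hR0 : 0 ≤ R := le_trans (by simp) (hR 0 m0 m0)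
  have h1 : 0 < 1 - lam := by linarith
  set D : ℝ := lam * R / (1 - lam) with hD
  have hD0 : 0 ≤ D := div_nonneg (mul_nonneg hlam0 hR0) h1.le
  set C : ℝ := Finset.univ.sup' Finset.univ_nonempty (fun m : M => ‖x0 - traj m 0‖) with hC
  have hCle : ∀ m : M, ‖x0 - traj m 0‖ ≤ C := fun m => by
    rw [hC]; exact Finset.le_sup' (fun m : M => ‖x0 - traj m 0‖) (Finset.mem_univ m)
  have hC0 : 0 ≤ C := le_trans (norm_nonneg _) (hCle m0)
  have htend : Filter.Tendsto (fun k : ℕ => lam ^ k * C) Filter.atTop (nhds 0) := by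
    simpa using (tendsto_pow_atTop_nhds_zero_of_lt_one hlam0 hlam1).mul_const C
  have hev : ∀ᶠ k in Filter.atTop, lam ^ k * C < ε := by
    have : Set.Iio ε ∈ nhds (0 : ℝ) := Iio_mem_nhds hε
    exact htend.eventually (Filter.eventually_iff_exists_mem.mpr ⟨Set.Iio ε, this, fun y hy => hy⟩)
  obtain ⟨K, hK⟩ := Filter.eventually_atTop.mp hev
  refine ⟨K + 1, fun σ x hx0 hrec k hk => ?_⟩
  -- key inductive bound
  have key : ∀ j : ℕ, ‖x (j + 1) - traj (σ j) (j + 1)‖ ≤ lam ^ (j + 1) * C + D := by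
    intro j
    induction j with
    | zero =>
      have h := hcontr (σ 0) (x 0) 0
      rw [hrec 0] at *
      calc ‖F (σ 0) (x 0) - traj (σ 0) 1‖ ≤ lam * ‖x 0 - traj (σ 0) 0‖ := hcontr (σ 0) (x 0) 0
        _ ≤ lam * C := by
            rw [hx0]; exact mul_le_mul_of_nonneg_left (hCle (σ 0)) hlam0
        _ ≤ lam ^ 1 * C + D := by rw [pow_one]; linarith
    | succ j ih =>
      have htri : ‖x (j + 1) - traj (σ (j + 1)) (j + 1)‖ ≤
          ‖x (j + 1) - traj (σ j) (j + 1)‖ + R := by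
        calc ‖x (j + 1) - traj (σ (j + 1)) (j + 1)‖
            ≤ ‖x (j + 1) - traj (σ j) (j + 1)‖ +
              ‖traj (σ j) (j + 1) - traj (σ (j + 1)) (j + 1)‖ := by
              have := norm_sub_le_norm_sub_add_norm_sub (x (j + 1)) (traj (σ j) (j + 1))
                (traj (σ (j + 1)) (j + 1))
              exact this
          _ ≤ ‖x (j + 1) - traj (σ j) (j + 1)‖ + R := by
              have := hR (j + 1) (σ j) (σ (j + 1))
              linarith
      calc ‖x (j + 1 + 1) - traj (σ (j + 1)) (j + 1 + 1)‖
          = ‖F (σ (j + 1)) (x (j + 1)) - traj (σ (j + 1)) (j + 1 + 1)‖ := by rw [hrec (j + 1)]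
        _ ≤ lam * ‖x (j + 1) - traj (σ (j + 1)) (j + 1)‖ := hcontr _ _ _
        _ ≤ lam * (lam ^ (j + 1) * C + D + R) := by
            apply mul_le_mul_of_nonneg_left _ hlam0
            linarith
        _ = lam ^ (j + 1 + 1) * C + (lam * D + lam * R) := by ring
        _ = lam ^ (j + 1 + 1) * C + D := by
            congr 1
            rw [hD]
            field_simp
            ring
  -- finish
  obtain ⟨j, rfl⟩ : ∃ j, k = j + 1 := by
    cases k with
    | zero => omega
    | succ j => exact ⟨j, rfl⟩
  have hmem : traj (σ j) (j + 1) ∈ convexHull ℝ (Set.range fun m => traj m (j + 1)) :=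
    subset_convexHull ℝ _ (Set.mem_range_self _)
  have hinf : infDist (x (j + 1)) (convexHull ℝ (Set.range fun m => traj m (j + 1))) ≤
      ‖x (j + 1) - traj (σ j) (j + 1)‖ := by
    simpa [dist_eq_norm] using infDist_le_dist_of_mem hmem
  have hpow : lam ^ (j + 1) * C < ε := hK (j + 1) (by omega)
  have := key j
  linarith
end

section
/- Let F₁, F₂ : ℝⁿ → ℝⁿ be Lipschitz with constants l₁, l₂. Suppose x*(k+1) = F₁(x*(k)) and the trajectory x(k) evolves by x(k+1) = F_{σ(k)}(x(k)) where σ(k) ∈ {1,2}. If ‖F_m(x) - x^(m)(k+1)‖ ≤ λ‖x - x^(m)(k)‖ for each m with canonical trajectories x^(1), x^(2) satisfying ‖x^(1)(k) - x^(2)(k)‖ ≤ R for all k, then for every k, min_m ‖x(k) - x^(m)(k)‖ ≤ λR/(1-λ) + λᵏ (min_m ‖x(0) - x^(m)(0)‖ + R). -/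
/-!
The distance `D k` from `x k` to the nearer of the two canonical trajectories obeys
`D (k + 1) ≤ λ (D k + R)`: the active map contracts towards its own trajectory, and that
trajectory is at most `R` farther from `x k` than the nearer one. Unrolling this affine
recursion gives the geometric bound.
-/

theorem le_div_one_sub_add_pow_mul {a : ℕ → ℝ} {lam c : ℝ} (hlam0 : 0 ≤ lam) (hlam1 : lam < 1)
    (hc : 0 ≤ c) (h : ∀ k, a (k + 1) ≤ lam * a k + c) (k : ℕ) :
    a k ≤ c / (1 - lam) + lam ^ k * a 0 := by
  have hfix : lam * (c / (1 - lam)) + c = c / (1 - lam) := by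
    field_simp [(sub_pos.2 hlam1).ne']
    ring
  induction k with
  | zero =>
    have : 0 ≤ c / (1 - lam) := div_nonneg hc (sub_nonneg.2 hlam1.le)
    simp only [pow_zero, one_mul]
    linarith
  | succ k ih =>
    calc a (k + 1) ≤ lam * a k + c := h k
      _ ≤ lam * (c / (1 - lam) + lam ^ k * a 0) + c := by gcongr
      _ = lam * (c / (1 - lam)) + c + lam ^ (k + 1) * a 0 := by ring
      _ = c / (1 - lam) + lam ^ (k + 1) * a 0 := by rw [hfix]

theorem min_fin_two_le {α : Type*} [LinearOrder α] (f : Fin 2 → α) (m : Fin 2) :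
    min (f 0) (f 1) ≤ f m := by
  fin_cases m
  · exact min_le_left _ _
  · exact min_le_right _ _

section Switching

variable {E : Type*} [SeminormedAddCommGroup E]

theorem norm_sub_le_min_add (x a b : E) : ‖x - a‖ ≤ min ‖x - a‖ ‖x - b‖ + ‖a - b‖ := by
  rw [← min_add_add_right]
  refine le_min (le_add_of_nonneg_right (norm_nonneg _)) ?_
  simpa only [norm_sub_rev b a] using norm_sub_le_norm_sub_add_norm_sub x b a

theorem norm_sub_le_min_fin_two_add (x : E) (a : Fin 2 → E) (m : Fin 2) :
    ‖x - a m‖ ≤ min ‖x - a 0‖ ‖x - a 1‖ + ‖a 0 - a 1‖ := by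
  fin_cases m
  · exact norm_sub_le_min_add x (a 0) (a 1)
  · rw [min_comm, norm_sub_rev (a 0)]
    exact norm_sub_le_min_add x (a 1) (a 0)

theorem min_norm_sub_succ_le (F : Fin 2 → E → E) (traj : Fin 2 → ℕ → E) {lam : ℝ}
    (hlam0 : 0 ≤ lam) (hcontr : ∀ m x k, ‖F m x - traj m (k + 1)‖ ≤ lam * ‖x - traj m k‖)
    {R : ℝ} (hR : ∀ k, ‖traj 0 k - traj 1 k‖ ≤ R) (σ : ℕ → Fin 2) (x : ℕ → E)
    (hx : ∀ k, x (k + 1) = F (σ k) (x k)) (k : ℕ) :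
    min ‖x (k + 1) - traj 0 (k + 1)‖ ‖x (k + 1) - traj 1 (k + 1)‖ ≤
      lam * min ‖x k - traj 0 k‖ ‖x k - traj 1 k‖ + lam * R := by
  calc min ‖x (k + 1) - traj 0 (k + 1)‖ ‖x (k + 1) - traj 1 (k + 1)‖
      ≤ ‖x (k + 1) - traj (σ k) (k + 1)‖ :=
        min_fin_two_le (fun m => ‖x (k + 1) - traj m (k + 1)‖) (σ k)
    _ ≤ lam * ‖x k - traj (σ k) k‖ := hx k ▸ hcontr (σ k) (x k) k
    _ ≤ lam * (min ‖x k - traj 0 k‖ ‖x k - traj 1 k‖ + R) := by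
        gcongr
        exact (norm_sub_le_min_fin_two_add (x k) (traj · k) (σ k)).trans (by gcongr; exact hR k)
    _ = lam * min ‖x k - traj 0 k‖ ‖x k - traj 1 k‖ + lam * R := mul_add _ _ _

end Switching

theorem two_map_switching_bound_general {n : ℕ}
    (F : Fin 2 → EuclideanSpace ℝ (Fin n) → EuclideanSpace ℝ (Fin n))
    (traj : Fin 2 → ℕ → EuclideanSpace ℝ (Fin n))
    (lam : ℝ) (hlam0 : 0 ≤ lam) (hlam1 : lam < 1)
    (hcontr : ∀ m (x : EuclideanSpace ℝ (Fin n)) k,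
      ‖F m x - traj m (k + 1)‖ ≤ lam * ‖x - traj m k‖)
    (R : ℝ) (hR : ∀ k, ‖traj 0 k - traj 1 k‖ ≤ R)
    (σ : ℕ → Fin 2) (x : ℕ → EuclideanSpace ℝ (Fin n))
    (hx : ∀ k, x (k + 1) = F (σ k) (x k)) :
    ∀ k, min ‖x k - traj 0 k‖ ‖x k - traj 1 k‖ ≤
      lam * R / (1 - lam) +
        lam ^ k * (min ‖x 0 - traj 0 0‖ ‖x 0 - traj 1 0‖ + R) := by
  intro k
  have hR0 : 0 ≤ R := (norm_nonneg _).trans (hR 0)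
  calc min ‖x k - traj 0 k‖ ‖x k - traj 1 k‖
      ≤ lam * R / (1 - lam) + lam ^ k * min ‖x 0 - traj 0 0‖ ‖x 0 - traj 1 0‖ :=
        le_div_one_sub_add_pow_mul (a := fun k => min ‖x k - traj 0 k‖ ‖x k - traj 1 k‖)
          hlam0 hlam1 (mul_nonneg hlam0 hR0)
          (min_norm_sub_succ_le F traj hlam0 hcontr hR σ x hx) k
    _ ≤ lam * R / (1 - lam) + lam ^ k * (min ‖x 0 - traj 0 0‖ ‖x 0 - traj 1 0‖ + R) := by
        gcongr
        exact le_add_of_nonneg_right hR0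

/-- Two-map specialization of Theorem 2: a trajectory switching arbitrarily between two
contracting systems stays near the pair of canonical trajectories. -/
theorem two_map_switching_bound {n : ℕ}
    (F : Fin 2 → EuclideanSpace ℝ (Fin n) → EuclideanSpace ℝ (Fin n))
    (l : Fin 2 → ℝ) (hLip : ∀ m (x y : EuclideanSpace ℝ (Fin n)),
      ‖F m x - F m y‖ ≤ l m * ‖x - y‖)
    (traj : Fin 2 → ℕ → EuclideanSpace ℝ (Fin n))
    (htraj : ∀ m k, traj m (k + 1) = F m (traj m k))
    (lam : ℝ) (hlam0 : 0 ≤ lam) (hlam1 : lam < 1)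
    (hcontr : ∀ m (x : EuclideanSpace ℝ (Fin n)) k,
      ‖F m x - traj m (k + 1)‖ ≤ lam * ‖x - traj m k‖)
    (R : ℝ) (hR : ∀ k, ‖traj 0 k - traj 1 k‖ ≤ R)
    (σ : ℕ → Fin 2) (x : ℕ → EuclideanSpace ℝ (Fin n))
    (hx : ∀ k, x (k + 1) = F (σ k) (x k)) :
    ∀ k, min ‖x k - traj 0 k‖ ‖x k - traj 1 k‖ ≤
      lam * R / (1 - lam) +
        lam ^ k * (min ‖x 0 - traj 0 0‖ ‖x 0 - traj 1 0‖ + R) :=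
  two_map_switching_bound_general F traj lam hlam0 hlam1 hcontr R hR σ x hx
end
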